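/- arXiv:2107.03241 — 2 statements merged into one kernel-verified Lean document; each statement's English description precedes it below -/
import Mathlib

section
/- Let φ : ℝⁿ → ℝⁿ be twice continuously differentiable and x : ℝ → ℝⁿ twice continuously differentiable, and suppose x'(ξ) = σ(ξ)·e₁ for all ξ with σ(ξ) > 0, where e₁ is the first standard basis vector. Suppose moreover that along the curve the Jacobian of φ maps e₁ to a positive multiple of e₁, i.e. ∂₁φ^{(1)}(x(ξ)) > 0 and ∂₁φ^{(j)}(x(ξ)) = 0 for all j ≥ 2. Set y = φ ∘ x and define g_x(ξ) = −(x'(ξ)·x''(ξ))/‖x'(ξ)‖³ and g_y(ξ) = −(y'(ξ)·y''(ξ))/‖y'(ξ)‖³. Then for every ξ, g_y(ξ) = g_x(ξ)/∂₁φ^{(1)}(x(ξ)) − ∂₁²φ^{(1)}(x(ξ))/(∂₁φ^{(1)}(x(ξ)))². -/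
/-!
Along a curve whose velocity is `c • u` for a unit vector `u` and a positive speed `c`,
the density gradient `-⟪x', x''⟫ / ‖x'‖³` is just `-c' / c²`. If `x' = σ • u` and `Dφ` maps `u`
to `α • w` along the curve, the chain rule gives `(φ ∘ x)' = (σ α) • w`, and differentiating
`α = ⟪w, Dφ(x) u⟫` gives `α' = σ ⟪w, D²φ(x) u u⟫`. Expanding `-(σ α)' / (σ α)²` yields the recursion.
-/

open scoped InnerProductSpace

section

variable {E F : Type*} [NormedAddCommGroup E] [InnerProductSpace ℝ E]
  [NormedAddCommGroup F] [InnerProductSpace ℝ F]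

noncomputable def curveDensityGradient (x : ℝ → E) (ξ : ℝ) : ℝ :=
  -(⟪deriv x ξ, deriv (deriv x) ξ⟫_ℝ / ‖deriv x ξ‖ ^ 3)

theorem curveDensityGradient_of_deriv_eq_smul {x : ℝ → E} {c : ℝ → ℝ} {u : E} {ξ : ℝ}
    (hu : ‖u‖ = 1) (hxc : ∀ t, deriv x t = c t • u) (hc : DifferentiableAt ℝ c ξ)
    (hcpos : 0 < c ξ) :
    curveDensityGradient x ξ = -deriv c ξ / c ξ ^ 2 := by
  have hx'' : deriv (deriv x) ξ = deriv c ξ • u := by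
    rw [funext hxc]
    exact (hc.hasDerivAt.smul_const u).deriv
  have huu : ⟪u, u⟫_ℝ = 1 := by rw [real_inner_self_eq_norm_sq, hu, one_pow]
  rw [curveDensityGradient, hx'', hxc, real_inner_smul_left, real_inner_smul_right, huu,
    norm_smul, hu, Real.norm_of_nonneg hcpos.le]
  field_simp

theorem eq_inner_deriv_of_deriv_eq_smul {x : ℝ → E} {c : ℝ → ℝ} {u : E} (hu : ‖u‖ = 1)
    (hxc : ∀ t, deriv x t = c t • u) : c = fun t => ⟪u, deriv x t⟫_ℝ := by
  funext t
  rw [hxc, real_inner_smul_right, real_inner_self_eq_norm_sq, hu]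
  ring

theorem hasDerivAt_fderiv_comp_apply {φ : E → F} {x : ℝ → E} {ξ : ℝ}
    (hφ : DifferentiableAt ℝ (fderiv ℝ φ) (x ξ)) (hx : DifferentiableAt ℝ x ξ) (v : E) :
    HasDerivAt (fun t => fderiv ℝ φ (x t) v) (fderiv ℝ (fderiv ℝ φ) (x ξ) (deriv x ξ) v) ξ :=
  (hφ.hasFDerivAt.comp_hasDerivAt ξ hx.hasDerivAt).clm_apply (hasDerivAt_const ξ v) |>.congr_deriv
    (by simp)

theorem curveDensityGradient_comp_of_straight {φ : E → F} {x : ℝ → E} {σ : ℝ → ℝ} {u : E} {w : F}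
    {ξ : ℝ} (hu : ‖u‖ = 1) (hw : ‖w‖ = 1) (hφ : ContDiff ℝ 2 φ) (hx : ContDiff ℝ 2 x)
    (hσ : 0 < σ ξ) (hstraight : ∀ t, deriv x t = σ t • u)
    (hpos : 0 < ⟪w, fderiv ℝ φ (x ξ) u⟫_ℝ)
    (haligned : ∀ t, fderiv ℝ φ (x t) u = ⟪w, fderiv ℝ φ (x t) u⟫_ℝ • w) :
    curveDensityGradient (φ ∘ x) ξ
      = curveDensityGradient x ξ / ⟪w, fderiv ℝ φ (x ξ) u⟫_ℝ
        - ⟪w, fderiv ℝ (fderiv ℝ φ) (x ξ) u u⟫_ℝ / ⟪w, fderiv ℝ φ (x ξ) u⟫_ℝ ^ 2 := by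
  set α : ℝ → ℝ := fun t => ⟪w, fderiv ℝ φ (x t) u⟫_ℝ
  set b := ⟪w, fderiv ℝ (fderiv ℝ φ) (x ξ) u u⟫_ℝ
  have hxd : Differentiable ℝ x := hx.differentiable (by norm_num)
  have hσd : DifferentiableAt ℝ σ ξ := by
    rw [eq_inner_deriv_of_deriv_eq_smul hu hstraight]
    exact (differentiableAt_const u).inner ℝ (hx.differentiable_deriv_two ξ)
  have hα : HasDerivAt α (σ ξ * b) ξ := by
    have hDφ : Differentiable ℝ (fderiv ℝ φ) :=
      (hφ.fderiv_right (m := 1) (by norm_num)).differentiable one_ne_zero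
    have h := (hasDerivAt_const ξ w).inner ℝ (hasDerivAt_fderiv_comp_apply (hDφ (x ξ)) (hxd ξ) u)
    simpa [hstraight ξ, real_inner_smul_right] using h
  have hy' : ∀ t, deriv (φ ∘ x) t = (σ t * α t) • w := fun t => by
    rw [fderiv_comp_deriv t ((hφ.differentiable (by norm_num)) (x t)) (hxd t), hstraight t,
      map_smul, haligned t, smul_smul]
  have hgx := curveDensityGradient_of_deriv_eq_smul hu hstraight hσd hσ
  have hgy := curveDensityGradient_of_deriv_eq_smul hw hy' (hσd.mul hα.differentiableAt)
    (mul_pos hσ hpos)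
  have hσα : HasDerivAt (fun t => σ t * α t) (deriv σ ξ * α ξ + σ ξ * (σ ξ * b)) ξ :=
    hσd.hasDerivAt.mul hα
  rw [hgx, hgy, hσα.deriv]
  change _ = _ / α ξ - b / α ξ ^ 2
  have hα0 : α ξ ≠ 0 := hpos.ne'
  field_simp
  ring

end

theorem EuclideanSpace.eq_smul_single_of_apply_eq_zero {ι : Type*} [Fintype ι] [DecidableEq ι]
    {v : EuclideanSpace ℝ ι} {i : ι} (hv : ∀ j, j ≠ i → v j = 0) :
    v = v i • EuclideanSpace.single i 1 := by
  ext j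
  rcases eq_or_ne j i with rfl | hj
  · simp
  · simp [hv j hj, hj]

/-- Simplified scalar recursion for the SRB density gradient along straight
unstable manifolds aligned with the first coordinate axis:
`g_y = g_x / ∂₁φ⁽¹⁾ − ∂₁²φ⁽¹⁾/(∂₁φ⁽¹⁾)²`. -/
theorem stmt4 {n : ℕ}
    (φ : EuclideanSpace ℝ (Fin (n+1)) → EuclideanSpace ℝ (Fin (n+1)))
    (x : ℝ → EuclideanSpace ℝ (Fin (n+1))) (σ : ℝ → ℝ)
    (hφ : ContDiff ℝ 2 φ) (hx : ContDiff ℝ 2 x)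
    (hσ : ∀ ξ : ℝ, 0 < σ ξ)
    (hstraight : ∀ ξ : ℝ, deriv x ξ = σ ξ • EuclideanSpace.single 0 1)
    (hpos : ∀ ξ : ℝ, 0 < fderiv ℝ φ (x ξ) (EuclideanSpace.single 0 1) 0)
    (hzero : ∀ ξ : ℝ, ∀ j : Fin (n+1), j ≠ 0 →
      fderiv ℝ φ (x ξ) (EuclideanSpace.single 0 1) j = 0)
    (y : ℝ → EuclideanSpace ℝ (Fin (n+1))) (hy : y = φ ∘ x)
    (gx gy : ℝ → ℝ)
    (hgx : ∀ ξ : ℝ, gx ξ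
      = -((inner ℝ (deriv x ξ) (deriv (deriv x) ξ) : ℝ) / ‖deriv x ξ‖ ^ 3))
    (hgy : ∀ ξ : ℝ, gy ξ
      = -((inner ℝ (deriv y ξ) (deriv (deriv y) ξ) : ℝ) / ‖deriv y ξ‖ ^ 3))
    (ξ : ℝ) :
    gy ξ = gx ξ / fderiv ℝ φ (x ξ) (EuclideanSpace.single 0 1) 0
      - fderiv ℝ (fderiv ℝ φ) (x ξ) (EuclideanSpace.single 0 1)
            (EuclideanSpace.single 0 1) 0
        / (fderiv ℝ φ (x ξ) (EuclideanSpace.single 0 1) 0) ^ 2 := by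
  have he : ‖(EuclideanSpace.single 0 1 : EuclideanSpace ℝ (Fin (n+1)))‖ = 1 := by simp
  have key := curveDensityGradient_comp_of_straight he he hφ hx (hσ ξ) hstraight
    (by simpa [EuclideanSpace.inner_single_left] using hpos ξ)
    (fun t => by
      simpa [EuclideanSpace.inner_single_left] using
        EuclideanSpace.eq_smul_single_of_apply_eq_zero (hzero t))
  simp only [EuclideanSpace.inner_single_left, map_one, one_mul] at key
  rw [hgy ξ, hgx ξ, hy]
  exact key
end

section
/- Let m ≤ n, let x : ℝᵐ → ℝⁿ be twice continuously differentiable with Jacobian ∇x(ξ) of rank m for every ξ, and let ρ : ℝⁿ → ℝ be continuously differentiable and strictly positive, such that ρ(x(ξ))·√(det G(ξ)) = 1 for all ξ, where G(ξ) = ∇x(ξ)ᵀ∇x(ξ). Then for every ξ and every i ∈ {1,…,m}, ∂_{ξᵢ}( log ρ(x(ξ)) ) = −tr( G(ξ)^{−1} · ∇x(ξ)ᵀ · ∂_{ξᵢ}∇x(ξ) ). -/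
/-! The density identity gives `log ρ(x(ξ)) = -½ log det G(ξ)`, and `det G > 0` because its square
root is nonzero. Jacobi's formula `∂ᵢ det G = tr(∂ᵢG · adj G)` turns the derivative into
`-½ tr(∂ᵢG · G⁻¹)`, where `∂ᵢG = ∇xᵀ ∂ᵢ∇x + (∇xᵀ ∂ᵢ∇x)ᵀ`; since `G` is symmetric both terms
contribute `tr(G⁻¹ ∇xᵀ ∂ᵢ∇x)`. -/

open Matrix

namespace Matrix

variable {n : Type*} [Fintype n] [DecidableEq n]

theorem det_updateRow_eq_sum_mul_adjugate {R : Type*} [CommRing R] (A : Matrix n n R) (k : n)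
    (v : n → R) : (A.updateRow k v).det = ∑ j, A.adjugate j k * v j := by
  rw [← cramer_transpose_apply, cramer_eq_adjugate_mulVec, ← adjugate_transpose, mulVec,
    dotProduct]
  simp only [transpose_apply]

theorem inv_det_mul_trace_mul_adjugate {K : Type*} [Field K] (A H : Matrix n n K) :
    A.det⁻¹ * trace (H * A.adjugate) = trace (H * A⁻¹) := by
  rw [inv_def, Ring.inverse_eq_inv', Matrix.mul_smul, trace_smul, smul_eq_mul]

theorem IsSymm.trace_add_transpose_mul_inv {K : Type*} [Field K] {G : Matrix n n K}
    (hG : G.IsSymm) (B : Matrix n n K) :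
    trace ((B + Bᵀ) * G⁻¹) = 2 * trace (G⁻¹ * B) := by
  have hBt : trace (Bᵀ * G⁻¹) = trace (G⁻¹ * B) := by
    rw [← trace_transpose, transpose_mul, transpose_transpose, transpose_nonsing_inv, hG.eq]
  rw [add_mul, trace_add, hBt, trace_mul_comm B]
  ring

variable (𝕜 : Type*) [NontriviallyNormedField 𝕜]

noncomputable def detContinuousMultilinearMap :
    ContinuousMultilinearMap 𝕜 (fun _ : n => n → 𝕜) 𝕜 where
  toMultilinearMap := (detRowAlternating : (n → 𝕜) [⋀^n]→ₗ[𝕜] 𝕜).toMultilinearMap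
  cont := continuous_id.matrix_det

end Matrix

section EntrywiseFDeriv

variable {𝕜 : Type*} [NontriviallyNormedField 𝕜] {E : Type*} [NormedAddCommGroup E]
  [NormedSpace 𝕜 E] {l m n : Type*}

/-- Matrices carry no global norm, so derivatives of matrix-valued maps are taken entrywise. -/
def HasEntrywiseFDerivAt (A : E → Matrix m n 𝕜) (A' : Matrix m n (E →L[𝕜] 𝕜)) (ξ : E) : Prop :=
  ∀ i j, HasFDerivAt (fun η => A η i j) (A' i j) ξ

theorem HasEntrywiseFDerivAt.transpose {A : E → Matrix m n 𝕜} {A' : Matrix m n (E →L[𝕜] 𝕜)}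
    {ξ : E} (h : HasEntrywiseFDerivAt A A' ξ) :
    HasEntrywiseFDerivAt (fun η => (A η)ᵀ) A'ᵀ ξ :=
  fun i j => h j i

variable [Fintype m]

theorem HasEntrywiseFDerivAt.mul {A : E → Matrix l m 𝕜} {A' : Matrix l m (E →L[𝕜] 𝕜)}
    {B : E → Matrix m n 𝕜} {B' : Matrix m n (E →L[𝕜] 𝕜)} {ξ : E}
    (hA : HasEntrywiseFDerivAt A A' ξ) (hB : HasEntrywiseFDerivAt B B' ξ) :
    HasEntrywiseFDerivAt (fun η => A η * B η)
      (of fun i k => ∑ j, (A ξ i j • B' j k + B ξ j k • A' i j)) ξ := fun i k => by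
  simp only [mul_apply, of_apply]
  exact HasFDerivAt.fun_sum fun j _ => (hA i j).mul (hB j k)

theorem mul_entrywiseFDeriv_apply (A : Matrix l m 𝕜) (A' : Matrix l m (E →L[𝕜] 𝕜))
    (B : Matrix m n 𝕜) (B' : Matrix m n (E →L[𝕜] 𝕜)) (v : E) :
    (of fun i k => ∑ j, (A i j • B' j k + B j k • A' i j)).map (fun L => L v)
      = A * B'.map (fun L => L v) + A'.map (fun L => L v) * B := by
  ext i k
  simp [mul_apply, Finset.sum_add_distrib, mul_comm]

variable [DecidableEq m]

theorem HasEntrywiseFDerivAt.det {A : E → Matrix m m 𝕜} {A' : Matrix m m (E →L[𝕜] 𝕜)} {ξ : E}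
    (h : HasEntrywiseFDerivAt A A' ξ) :
    HasFDerivAt (fun η => (A η).det) (∑ k, ∑ j, (A ξ).adjugate j k • A' k j) ξ := by
  have hrows : ∀ k, HasFDerivAt (fun η => A η k) (ContinuousLinearMap.pi (A' k)) ξ :=
    fun k => hasFDerivAt_pi'' fun j => h k j
  refine (HasFDerivAt.multilinear_comp (detContinuousMultilinearMap 𝕜) hrows).congr_fderiv ?_
  ext v
  simp only [FunLike.coe_sum, Finset.sum_apply, ContinuousLinearMap.comp_apply,
    FunLike.coe_smul, Pi.smul_apply, smul_eq_mul]
  refine Finset.sum_congr rfl fun k _ => ?_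
  rw [← det_updateRow_eq_sum_mul_adjugate]
  rfl

theorem sum_adjugate_smul_apply_eq_trace (A : Matrix m m 𝕜) (A' : Matrix m m (E →L[𝕜] 𝕜)) (v : E) :
    (∑ k, ∑ j, A.adjugate j k • A' k j) v = trace (A'.map (fun L => L v) * A.adjugate) := by
  simp [trace, mul_apply, mul_comm]

end EntrywiseFDeriv

theorem ContDiff.hasEntrywiseFDerivAt_jacobian {E : Type*} [NormedAddCommGroup E]
    [NormedSpace ℝ E] {ι κ : Type*} [Fintype ι] {x : E → EuclideanSpace ℝ ι}
    (hx : ContDiff ℝ 2 x) (e : κ → E) (ξ : E) :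
    HasEntrywiseFDerivAt (fun η => of fun a j => fderiv ℝ x η (e j) a)
      (of fun a j => fderiv ℝ (fun η => fderiv ℝ x η (e j) a) ξ) ξ := fun a j => by
  have hdx : Differentiable ℝ (fderiv ℝ x) :=
    (hx.fderiv_right (m := 1) le_rfl).differentiable one_ne_zero
  exact ((EuclideanSpace.proj a).differentiableAt.comp ξ
    ((hdx ξ).clm_apply (differentiableAt_const (e j)))).hasFDerivAt

theorem Real.pos_of_mul_sqrt_eq_one {r d : ℝ} (h : r * √d = 1) : 0 < d :=
  Real.sqrt_ne_zero'.mp (right_ne_zero_of_mul_eq_one h)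

theorem Real.log_eq_neg_half_log_of_mul_sqrt_eq_one {r d : ℝ} (h : r * √d = 1) :
    Real.log r = -2⁻¹ * Real.log d := by
  have hsum : Real.log r + Real.log √d = 0 := by
    rw [← Real.log_mul (left_ne_zero_of_mul_eq_one h) (right_ne_zero_of_mul_eq_one h), h,
      Real.log_one]
  rw [Real.log_sqrt (Real.pos_of_mul_sqrt_eq_one h).le] at hsum
  linarith

theorem stmt8_general {m n : ℕ}
    (x : EuclideanSpace ℝ (Fin m) → EuclideanSpace ℝ (Fin n))
    (ρ : EuclideanSpace ℝ (Fin n) → ℝ)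
    (hx : ContDiff ℝ 2 x)
    (J : EuclideanSpace ℝ (Fin m) → Matrix (Fin n) (Fin m) ℝ)
    (hJ : ∀ ξ a j, J ξ a j = fderiv ℝ x ξ (EuclideanSpace.single j 1) a)
    (hdens : ∀ ξ, ρ (x ξ) * Real.sqrt ((((J ξ)ᵀ) * J ξ).det) = 1)
    (J' : Fin m → EuclideanSpace ℝ (Fin m) → Matrix (Fin n) (Fin m) ℝ)
    (hJ' : ∀ i ξ a j, J' i ξ a j
      = fderiv ℝ (fun η => fderiv ℝ x η (EuclideanSpace.single j 1) a) ξ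
          (EuclideanSpace.single i 1))
    (ξ : EuclideanSpace ℝ (Fin m)) (i : Fin m) :
    fderiv ℝ (fun η => Real.log (ρ (x η))) ξ (EuclideanSpace.single i 1)
      = - Matrix.trace (((((J ξ)ᵀ) * J ξ)⁻¹ * ((J ξ)ᵀ)) * J' i ξ) := by
  have hJ_eq : J = fun η => of fun a j => fderiv ℝ x η (EuclideanSpace.single j 1) a :=
    funext fun η => ext fun a j => hJ η a j
  obtain ⟨Jd, hJd, hJd_apply⟩ : ∃ Jd, HasEntrywiseFDerivAt J Jd ξ ∧
      Jd.map (fun L => L (EuclideanSpace.single i 1)) = J' i ξ :=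
    ⟨_, hJ_eq ▸ hx.hasEntrywiseFDerivAt_jacobian _ ξ, ext fun a j => (hJ' i ξ a j).symm⟩
  have hlog : (fun η => Real.log (ρ (x η))) = fun η => -2⁻¹ * Real.log ((J η)ᵀ * J η).det :=
    funext fun η => Real.log_eq_neg_half_log_of_mul_sqrt_eq_one (hdens η)
  have hderiv := ((hJd.transpose.mul hJd).det.log
    (Real.pos_of_mul_sqrt_eq_one (hdens ξ)).ne').const_mul (-2⁻¹)
  have hG : ((J ξ)ᵀ * J ξ).IsSymm := by rw [IsSymm, transpose_mul, transpose_transpose]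
  rw [hlog, hderiv.fderiv]
  simp only [FunLike.coe_smul, Pi.smul_apply, smul_eq_mul]
  have hJ't : (J' i ξ)ᵀ * J ξ = ((J ξ)ᵀ * J' i ξ)ᵀ := by rw [transpose_mul, transpose_transpose]
  rw [sum_adjugate_smul_apply_eq_trace, mul_entrywiseFDeriv_apply, transpose_map, hJd_apply,
    inv_det_mul_trace_mul_adjugate, hJ't, hG.trace_add_transpose_mul_inv, Matrix.mul_assoc]
  ring

/-- General formula for the SRB density gradient on an `m`-dimensional unstable
manifold: differentiating the density-conservation identity
`ρ(x(ξ))√(det G(ξ)) = 1` yields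
`∂ᵢ log ρ(x(ξ)) = −tr(G(ξ)⁻¹ ∇x(ξ)ᵀ ∂ᵢ∇x(ξ))`, where `G = ∇xᵀ∇x`. -/
theorem stmt8 {m n : ℕ} (hmn : m ≤ n)
    (x : EuclideanSpace ℝ (Fin m) → EuclideanSpace ℝ (Fin n))
    (ρ : EuclideanSpace ℝ (Fin n) → ℝ)
    (hx : ContDiff ℝ 2 x) (hρ : ContDiff ℝ 1 ρ) (hρpos : ∀ p, 0 < ρ p)
    (J : EuclideanSpace ℝ (Fin m) → Matrix (Fin n) (Fin m) ℝ)
    (hJ : ∀ ξ a j, J ξ a j = fderiv ℝ x ξ (EuclideanSpace.single j 1) a)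
    (hrank : ∀ ξ, (J ξ).rank = m)
    (hdens : ∀ ξ, ρ (x ξ) * Real.sqrt ((((J ξ)ᵀ) * J ξ).det) = 1)
    (J' : Fin m → EuclideanSpace ℝ (Fin m) → Matrix (Fin n) (Fin m) ℝ)
    (hJ' : ∀ i ξ a j, J' i ξ a j
      = fderiv ℝ (fun η => fderiv ℝ x η (EuclideanSpace.single j 1) a) ξ
          (EuclideanSpace.single i 1))
    (ξ : EuclideanSpace ℝ (Fin m)) (i : Fin m) :
    fderiv ℝ (fun η => Real.log (ρ (x η))) ξ (EuclideanSpace.single i 1)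
      = - Matrix.trace (((((J ξ)ᵀ) * J ξ)⁻¹ * ((J ξ)ᵀ)) * J' i ξ) :=
  stmt8_general x ρ hx J hJ hdens J' hJ' ξ i
end
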